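/- Let {W, W̃, Z} be an LTONP data set with Pick operator Λ = WW* − W̃W̃* strictly positive, and set B = W E_𝒴, B̃ = W̃ E_𝒰, R∘ = (I_𝒰 + B̃*Λ⁻¹B̃)^{-1/2}. Define, for λ in the open unit disc, Υ₁₂(λ) = B*(I − λZ*)⁻¹ Λ⁻¹ B̃ R∘, Υ₂₂(λ) = R∘ + B̃*(I − λZ*)⁻¹ Λ⁻¹ B̃ R∘, and the central solution F∘(λ) = B*(Λ + B̃B̃*)⁻¹ (I − λ ΛZ*(Λ + B̃B̃*)⁻¹)⁻¹ B̃. Then for every λ in the open unit disc, Υ₂₂(λ) is invertible, I − λ ΛZ*(Λ + B̃B̃*)⁻¹ is invertible, and F∘(λ) = Υ₁₂(λ) Υ₂₂(λ)⁻¹. -/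

import Mathlib

/- Statement 11 (Quotient formula for the central solution): Let {W, W̃, Z} be an
LTONP data set with strictly positive Pick operator Λ, B = W E_𝒴, B̃ = W̃ E_𝒰 and
R∘ = (I + B̃*Λ⁻¹B̃)^{-1/2}.  With Υ₁₂(λ) = B*(I − λZ*)⁻¹Λ⁻¹B̃R∘,
Υ₂₂(λ) = R∘ + B̃*(I − λZ*)⁻¹Λ⁻¹B̃R∘ and the central solution
F∘(λ) = B*(Λ + B̃B̃*)⁻¹(I − λΛZ*(Λ + B̃B̃*)⁻¹)⁻¹B̃, we have, for every λ in the open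
unit disc: Υ₂₂(λ) is invertible, I − λΛZ*(Λ + B̃B̃*)⁻¹ is invertible, and
F∘(λ) = Υ₁₂(λ)Υ₂₂(λ)⁻¹. -/

open ContinuousLinearMap Filter Topology

noncomputable section

local notation "ℓ²(" X ")" => lp (fun _ : ℕ => X) 2

/-- A bounded operator on a Hilbert space is strictly positive if it is positive
(self-adjoint with non-negative quadratic form) and invertible. -/
def IsStrictlyPositiveOp {H : Type*} [NormedAddCommGroup H] [InnerProductSpace ℂ H]
    [CompleteSpace H] (T : H →L[ℂ] H) : Prop :=
  T.IsPositive ∧ IsUnit T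

/-! Since `Z W = W S` with `S` an isometry, and `S S* + E E* = I` on `ℓ²(𝒰)`, the Stein
inequalities `Z (W W*) Z* ≤ W W*` and `Z Λ Z* ≤ Λ + B̃ B̃*` hold. An operator `a` with
`a q a* ≤ q` for a strictly positive `q` is similar, through `q^{1/2}`, to a contraction, so
`I - λ a*` is invertible for `|λ| < 1`; applied to `(Z, W W*)` and to
`((Λ + B̃ B̃*)⁻¹ Z Λ, (Λ + B̃ B̃*)⁻¹)` this makes `I - λ Z*` and `I - λ Λ Z* (Λ + B̃ B̃*)⁻¹`
invertible. The rest is algebra around the factorization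
`(I - λ Λ Z* (Λ + B̃ B̃*)⁻¹) (Λ + B̃ B̃*) = Λ (I - λ Z*) + B̃ B̃*`: with `X = (I - λ Z*)⁻¹ Λ⁻¹ B̃`
it shows that `I + X B̃*` is invertible, hence so are `I + B̃* X` and `Υ₂₂ = (I + B̃* X) R∘`,
and that `B̃ (I + B̃* X) = (I - λ Λ Z* (Λ + B̃ B̃*)⁻¹) (Λ + B̃ B̃*) X`, which is the quotient
formula. -/

open scoped InnerProduct InnerProductSpace

section Shift

variable {H : Type*} [NormedAddCommGroup H] [InnerProductSpace ℂ H]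

theorem shift_single {S : ℓ²(H) →L[ℂ] ℓ²(H)} (hS0 : ∀ x : ℓ²(H), S x 0 = 0)
    (hS1 : ∀ (x : ℓ²(H)) (n : ℕ), S x (n + 1) = x n) (n : ℕ) (y : H) :
    S (lp.single 2 n y) = lp.single 2 (n + 1) y := by
  refine lp.ext (funext fun m => ?_)
  cases m with
  | zero => simp [hS0]
  | succ m => simp [hS1, Pi.single_apply]

theorem adjoint_shift_apply [CompleteSpace H] {S : ℓ²(H) →L[ℂ] ℓ²(H)}
    (hS0 : ∀ x : ℓ²(H), S x 0 = 0) (hS1 : ∀ (x : ℓ²(H)) (n : ℕ), S x (n + 1) = x n)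
    (u : ℓ²(H)) (n : ℕ) :
    (S†) u n = u (n + 1) := by
  refine ext_inner_left ℂ fun y => ?_
  calc ⟪y, (S†) u n⟫_ℂ = ⟪lp.single 2 n y, (S†) u⟫_ℂ := by rw [lp.inner_single_left]
    _ = ⟪lp.single 2 (n + 1) y, u⟫_ℂ := by rw [adjoint_inner_right, shift_single hS0 hS1]
    _ = ⟪y, u (n + 1)⟫_ℂ := by rw [lp.inner_single_left]

theorem adjoint_shift_comp_shift [CompleteSpace H] {S : ℓ²(H) →L[ℂ] ℓ²(H)}
    (hS0 : ∀ x : ℓ²(H), S x 0 = 0) (hS1 : ∀ (x : ℓ²(H)) (n : ℕ), S x (n + 1) = x n) :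
    S† ∘L S = 1 := by
  ext x : 1
  refine lp.ext (funext fun n => ?_)
  simp [adjoint_shift_apply hS0 hS1, hS1]

theorem embedding_eq_single {E : H →L[ℂ] ℓ²(H)} (hE0 : ∀ y : H, E y 0 = y)
    (hE1 : ∀ (y : H) (n : ℕ), E y (n + 1) = 0) (y : H) : E y = lp.single 2 0 y := by
  refine lp.ext (funext fun m => ?_)
  cases m with
  | zero => simp [hE0]
  | succ m => simp [hE1]

theorem adjoint_embedding_apply [CompleteSpace H] {E : H →L[ℂ] ℓ²(H)}
    (hE0 : ∀ y : H, E y 0 = y) (hE1 : ∀ (y : H) (n : ℕ), E y (n + 1) = 0) (u : ℓ²(H)) :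
    (E†) u = u 0 := by
  refine ext_inner_left ℂ fun y => ?_
  rw [adjoint_inner_right, embedding_eq_single hE0 hE1, lp.inner_single_left]

theorem shift_comp_adjoint_add_embedding_comp_adjoint [CompleteSpace H] {S : ℓ²(H) →L[ℂ] ℓ²(H)}
    {E : H →L[ℂ] ℓ²(H)} (hS0 : ∀ x : ℓ²(H), S x 0 = 0)
    (hS1 : ∀ (x : ℓ²(H)) (n : ℕ), S x (n + 1) = x n) (hE0 : ∀ y : H, E y 0 = y)
    (hE1 : ∀ (y : H) (n : ℕ), E y (n + 1) = 0) : S ∘L S† + E ∘L E† = 1 := by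
  ext u : 1
  refine lp.ext (funext fun n => ?_)
  cases n with
  | zero => simp [hS0, hE0, adjoint_embedding_apply hE0 hE1]
  | succ n => simp [hS1, hE1, adjoint_shift_apply hS0 hS1]

end Shift

theorem isStarProjection_mul_star_of_star_mul_self_eq_one {R : Type*} [Monoid R] [StarMul R]
    {s : R} (h : star s * s = 1) : IsStarProjection (s * star s) where
  isIdempotentElem := by
    rw [IsIdempotentElem, mul_assoc, ← mul_assoc (star s), h, one_mul]
  isSelfAdjoint := by rw [IsSelfAdjoint, star_mul, star_star]

section Stein

variable {K K' U 𝒵 : Type*}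
  [NormedAddCommGroup K] [InnerProductSpace ℂ K] [CompleteSpace K]
  [NormedAddCommGroup K'] [InnerProductSpace ℂ K'] [CompleteSpace K']
  [NormedAddCommGroup U] [InnerProductSpace ℂ U] [CompleteSpace U]
  [NormedAddCommGroup 𝒵] [InnerProductSpace ℂ 𝒵] [CompleteSpace 𝒵]

theorem comp_comp_adjoint_le_comp_adjoint {T : K →L[ℂ] K} (hT : T ≤ 1) (V : K →L[ℂ] 𝒵) :
    V ∘L T ∘L V† ≤ V ∘L V† := by
  have h := ((ContinuousLinearMap.le_def T 1).mp hT).conj_adjoint V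
  rw [ContinuousLinearMap.le_def]
  simpa only [sub_comp, comp_sub, one_def, id_comp] using h

theorem comp_comp_adjoint_of_comp_eq {Z : 𝒵 →L[ℂ] 𝒵} {V : K →L[ℂ] 𝒵} {S : K →L[ℂ] K}
    (hVS : Z ∘L V = V ∘L S) : Z ∘L (V ∘L V†) ∘L Z† = V ∘L (S ∘L S†) ∘L V† := calc
  Z ∘L (V ∘L V†) ∘L Z† = (Z ∘L V) ∘L (Z ∘L V)† := by simp only [adjoint_comp, comp_assoc]
  _ = V ∘L (S ∘L S†) ∘L V† := by simp only [hVS, adjoint_comp, comp_assoc]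

theorem comp_comp_adjoint_le_of_comp_eq {Z : 𝒵 →L[ℂ] 𝒵} {V : K →L[ℂ] 𝒵} {S : K →L[ℂ] K}
    (hVS : Z ∘L V = V ∘L S) (hS : S† ∘L S = 1) : Z ∘L (V ∘L V†) ∘L Z† ≤ V ∘L V† := by
  rw [comp_comp_adjoint_of_comp_eq hVS]
  exact comp_comp_adjoint_le_comp_adjoint
    (isStarProjection_mul_star_of_star_mul_self_eq_one hS).le_one V

theorem comp_comp_adjoint_eq_of_comp_eq {Z : 𝒵 →L[ℂ] 𝒵} {V : K →L[ℂ] 𝒵} {S : K →L[ℂ] K}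
    {E : U →L[ℂ] K} (hVS : Z ∘L V = V ∘L S) (hSE : S ∘L S† + E ∘L E† = 1) :
    Z ∘L (V ∘L V†) ∘L Z† = V ∘L V† - (V ∘L E) ∘L (V ∘L E)† := by
  rw [comp_comp_adjoint_of_comp_eq hVS, eq_sub_of_add_eq hSE]
  simp only [comp_sub, sub_comp, one_def, id_comp, adjoint_comp, comp_assoc]

theorem comp_sub_comp_adjoint_le {Z : 𝒵 →L[ℂ] 𝒵} {V : K →L[ℂ] 𝒵} {S : K →L[ℂ] K}
    {V' : K' →L[ℂ] 𝒵} {S' : K' →L[ℂ] K'} {E : U →L[ℂ] K'}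
    (hVS : Z ∘L V = V ∘L S) (hS : S† ∘L S = 1)
    (hVS' : Z ∘L V' = V' ∘L S') (hSE : S' ∘L S'† + E ∘L E† = 1) :
    Z ∘L (V ∘L V† - V' ∘L V'†) ∘L Z† ≤ (V ∘L V† - V' ∘L V'†) + (V' ∘L E) ∘L (V' ∘L E)† := calc
  Z ∘L (V ∘L V† - V' ∘L V'†) ∘L Z† = Z ∘L (V ∘L V†) ∘L Z† - Z ∘L (V' ∘L V'†) ∘L Z† := by
    rw [sub_comp, comp_sub]
  _ ≤ V ∘L V† - (V' ∘L V'† - (V' ∘L E) ∘L (V' ∘L E)†) := by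
    rw [comp_comp_adjoint_eq_of_comp_eq hVS' hSE]
    exact sub_le_sub_right (comp_comp_adjoint_le_of_comp_eq hVS hS) _
  _ = (V ∘L V† - V' ∘L V'†) + (V' ∘L E) ∘L (V' ∘L E)† := by abel

end Stein

section CStarAlgebra

variable {A : Type*} [CStarAlgebra A] [PartialOrder A] [StarOrderedRing A]

open CFC in
theorem isUnit_one_sub_smul_star_of_mul_mul_star_le {a q : A} (hq : IsStrictlyPositive q)
    (haq : a * q * star a ≤ q) {z : ℂ} (hz : ‖z‖ < 1) : IsUnit (1 - z • star a) := by
  set s := q ^ (1 / 2 : ℝ)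
  set t := q ^ (-(1 / 2) : ℝ)
  have hst : s * t = 1 := rpow_mul_rpow_neg _ hq
  have hts : t * s = 1 := rpow_neg_mul_rpow _ hq
  have hss : s * s = q := by
    rw [show s = sqrt q from sqrt_eq_rpow.symm, sqrt_mul_sqrt_self q hq.nonneg]
  have hs : IsSelfAdjoint s := .of_nonneg rpow_nonneg
  have ht : IsSelfAdjoint t := .of_nonneg rpow_nonneg
  set g := s * star a * t
  have hgg : star g * g ≤ 1 := calc
    star g * g = t * (a * (s * s) * star a) * t := by
      simp only [g, star_mul, star_star, hs.star_eq, ht.star_eq, mul_assoc]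
    _ ≤ t * q * t := by rw [hss]; exact ht.conjugate_le_conjugate haq
    _ = 1 := conjugate_rpow_neg_one_half q hq
  have hg : ‖g‖ ≤ 1 := by
    have h := (CStarAlgebra.norm_le_one_iff_of_nonneg _ (star_mul_self_nonneg g)).mpr hgg
    rw [CStarRing.norm_star_mul_self] at h
    nlinarith [norm_nonneg g]
  have hsim : 1 - z • star a = t * (1 - z • g) * s := by
    have : star a = t * g * s := by
      simp only [g, ← mul_assoc, hts, one_mul]; rw [mul_assoc, hts, mul_one]
    rw [this, mul_sub, sub_mul, mul_one, hts, mul_smul_comm, smul_mul_assoc]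
  have hlt : ‖z • g‖ < 1 := by
    rw [norm_smul]; nlinarith [norm_nonneg z]
  rw [hsim]
  exact ((isUnit_iff_exists.mpr ⟨s, hts, hst⟩).mul (isUnit_one_sub_of_norm_lt_one hlt)).mul
    (isUnit_iff_exists.mpr ⟨t, hst, hts⟩)

theorem conjugate_ringInverse_le {l d : A} (hl : IsStrictlyPositive l) (hld : l ≤ d) :
    l * Ring.inverse d * l ≤ l := calc
  l * Ring.inverse d * l ≤ l * Ring.inverse l * l :=
    hl.isSelfAdjoint.conjugate_le_conjugate (CStarAlgebra.ringInverse_le_ringInverse hld hl)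
  _ = l := by rw [Ring.mul_inverse_cancel _ hl.isUnit, one_mul]

theorem isUnit_one_sub_smul_mul_star_mul_ringInverse {c l d : A} (hl : IsStrictlyPositive l)
    (hld : l ≤ d) (hcl : c * l * star c ≤ d) {z : ℂ} (hz : ‖z‖ < 1) :
    IsUnit (1 - z • (l * star c * Ring.inverse d)) := by
  have hd : IsStrictlyPositive (Ring.inverse d) := (hl.of_le hld).ringInverse
  have hdsa : star (Ring.inverse d) = Ring.inverse d := hd.isSelfAdjoint.star_eq
  set a := Ring.inverse d * c * l
  have hstar : star a = l * star c * Ring.inverse d := by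
    simp only [a, star_mul, hdsa, hl.isSelfAdjoint.star_eq, mul_assoc]
  rw [← hstar]
  refine isUnit_one_sub_smul_star_of_mul_mul_star_le hd ?_ hz
  calc a * Ring.inverse d * star a
      = (Ring.inverse d * c) * (l * Ring.inverse d * l) * star (Ring.inverse d * c) := by
        simp only [a, star_mul, hdsa, hl.isSelfAdjoint.star_eq, mul_assoc]
    _ ≤ (Ring.inverse d * c) * l * star (Ring.inverse d * c) :=
        star_right_conjugate_le_conjugate (conjugate_ringInverse_le hl hld) _
    _ = Ring.inverse d * (c * l * star c) * Ring.inverse d := by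
        simp only [star_mul, hdsa, mul_assoc]
    _ ≤ Ring.inverse d * d * Ring.inverse d := hd.isSelfAdjoint.conjugate_le_conjugate hcl
    _ = Ring.inverse d := by rw [Ring.inverse_mul_cancel _ (hl.of_le hld).isUnit, one_mul]

theorem isUnit_of_mul_self_eq_ringInverse_one_add {r p : A} (hp : 0 ≤ p)
    (hr : r * r = Ring.inverse (1 + p)) : IsUnit r :=
  isUnit_mul_self_iff.mp (hr ▸ (isStrictlyPositive_one.add_nonneg hp).isUnit.ringInverse)

end CStarAlgebra

theorem one_sub_smul_mul_ringInverse_mul {R : Type*} [Ring R] [Algebra ℂ R] {d : R}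
    (hd : IsUnit d) (z : ℂ) (l c : R) :
    (1 - z • (l * c * Ring.inverse d)) * d = l * (1 - z • c) + (d - l) := by
  rw [sub_mul, one_mul, smul_mul_assoc, Ring.inverse_mul_cancel_right _ _ hd, mul_sub, mul_one,
    mul_smul_comm]
  abel

section Operators

variable {E F : Type*} [NormedAddCommGroup E] [NormedSpace ℂ E]
  [NormedAddCommGroup F] [NormedSpace ℂ F]

theorem isUnit_one_add_comp_of_isUnit_one_add_comp {x : E →L[ℂ] F} {y : F →L[ℂ] E}
    (h : IsUnit (1 + x ∘L y)) : IsUnit (1 + y ∘L x) := by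
  set i := Ring.inverse (1 + x ∘L y)
  have hi : (1 + x ∘L y) ∘L i = 1 := Ring.mul_inverse_cancel _ h
  have ih : i ∘L (1 + x ∘L y) = 1 := Ring.inverse_mul_cancel _ h
  refine isUnit_iff_exists.mpr ⟨1 - y ∘L i ∘L x, ?_, ?_⟩
  · calc (1 + y ∘L x) * (1 - y ∘L i ∘L x)
        = 1 + y ∘L x - y ∘L ((1 + x ∘L y) ∘L i) ∘L x := by
          simp only [mul_def, add_comp, comp_sub, comp_add, one_def, id_comp, comp_id, comp_assoc]
      _ = 1 := by rw [hi]; simp only [one_def, id_comp, add_sub_cancel_right]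
  · calc (1 - y ∘L i ∘L x) * (1 + y ∘L x)
        = 1 + y ∘L x - y ∘L (i ∘L (1 + x ∘L y)) ∘L x := by
          simp only [mul_def, sub_comp, comp_add, add_comp, one_def, id_comp, comp_id, comp_assoc]
          abel
      _ = 1 := by rw [ih]; simp only [one_def, id_comp, add_sub_cancel_right]

theorem comp_ringInverse_cancel_left {U : E →L[ℂ] E} (hU : IsUnit U) (f : F →L[ℂ] E) :
    U ∘L (Ring.inverse U ∘L f) = f := by
  rw [← comp_assoc, ← mul_def, Ring.mul_inverse_cancel _ hU, one_def, id_comp]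

theorem ringInverse_comp_cancel_left {U : E →L[ℂ] E} (hU : IsUnit U) (f : F →L[ℂ] E) :
    Ring.inverse U ∘L (U ∘L f) = f := by
  rw [← comp_assoc, ← mul_def, Ring.inverse_mul_cancel _ hU, one_def, id_comp]

theorem comp_ringInverse_cancel_right {U : F →L[ℂ] F} (hU : IsUnit U) (f : F →L[ℂ] E) :
    f ∘L U ∘L Ring.inverse U = f := by
  rw [← mul_def, Ring.mul_inverse_cancel _ hU, one_def, comp_id]

end Operators

section QuotientFormula

variable {𝒵 𝒰 : Type*} [NormedAddCommGroup 𝒵] [NormedSpace ℂ 𝒵]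
  [NormedAddCommGroup 𝒰] [NormedSpace ℂ 𝒰]

theorem isUnit_add_comp_of_comp_eq_add {Λ A M D : 𝒵 →L[ℂ] 𝒵} {Bt : 𝒰 →L[ℂ] 𝒵}
    {Bs : 𝒵 →L[ℂ] 𝒰} {R : 𝒰 →L[ℂ] 𝒰} (hΛ : IsUnit Λ) (hA : IsUnit A) (hM : IsUnit M)
    (hD : IsUnit D) (hR : IsUnit R) (hMD : M ∘L D = Λ ∘L A + Bt ∘L Bs) :
    IsUnit (R + Bs ∘L (Ring.inverse A ∘L (Ring.inverse Λ ∘L (Bt ∘L R)))) := by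
  set X := Ring.inverse A ∘L (Ring.inverse Λ ∘L Bt)
  have hXBs : 1 + X ∘L Bs = Ring.inverse A ∘L (Ring.inverse Λ ∘L (M ∘L D)) := by
    rw [hMD, comp_add, comp_add, ringInverse_comp_cancel_left hΛ, ← mul_def,
      Ring.inverse_mul_cancel _ hA]
    simp only [X, comp_assoc]
  have h : IsUnit (1 + Bs ∘L X) := by
    refine isUnit_one_add_comp_of_isUnit_one_add_comp ?_
    rw [hXBs]
    exact hA.ringInverse.mul (hΛ.ringInverse.mul (hM.mul hD))
  have hΥ : R + Bs ∘L (Ring.inverse A ∘L (Ring.inverse Λ ∘L (Bt ∘L R))) = (1 + Bs ∘L X) * R := by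
    simp only [X, mul_def, add_comp, one_def, id_comp, comp_assoc]
  rw [hΥ]
  exact h.mul hR

theorem ringInverse_comp_ringInverse_comp_eq_of_comp_eq_add {Λ A M D : 𝒵 →L[ℂ] 𝒵}
    {Bt : 𝒰 →L[ℂ] 𝒵} {Bs : 𝒵 →L[ℂ] 𝒰} {R : 𝒰 →L[ℂ] 𝒰} (hΛ : IsUnit Λ) (hA : IsUnit A)
    (hM : IsUnit M) (hD : IsUnit D) (hR : IsUnit R) (hMD : M ∘L D = Λ ∘L A + Bt ∘L Bs) :
    Ring.inverse D ∘L (Ring.inverse M ∘L Bt) =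
      (Ring.inverse A ∘L (Ring.inverse Λ ∘L (Bt ∘L R))) ∘L
        Ring.inverse (R + Bs ∘L (Ring.inverse A ∘L (Ring.inverse Λ ∘L (Bt ∘L R)))) := by
  have hΥ := isUnit_add_comp_of_comp_eq_add hΛ hA hM hD hR hMD
  set Υ := R + Bs ∘L (Ring.inverse A ∘L (Ring.inverse Λ ∘L (Bt ∘L R)))
  set X := Ring.inverse A ∘L (Ring.inverse Λ ∘L Bt)
  have hBtΥ : Bt ∘L Υ = M ∘L (D ∘L (X ∘L R)) := by
    calc Bt ∘L Υ = (Λ ∘L A + Bt ∘L Bs) ∘L (X ∘L R) := by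
          simp only [Υ, X, add_comp, comp_add, comp_assoc, comp_ringInverse_cancel_left hA,
            comp_ringInverse_cancel_left hΛ]
      _ = M ∘L (D ∘L (X ∘L R)) := by rw [← hMD, comp_assoc]
  calc Ring.inverse D ∘L (Ring.inverse M ∘L Bt)
      = Ring.inverse D ∘L (Ring.inverse M ∘L Bt) ∘L Υ ∘L Ring.inverse Υ :=
        (comp_ringInverse_cancel_right hΥ _).symm
    _ = (Ring.inverse D ∘L (Ring.inverse M ∘L (Bt ∘L Υ))) ∘L Ring.inverse Υ := by
        simp only [comp_assoc]
    _ = (X ∘L R) ∘L Ring.inverse Υ := by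
        rw [hBtΥ, ringInverse_comp_cancel_left hM, ringInverse_comp_cancel_left hD]
    _ = _ := by simp only [X, comp_assoc]

end QuotientFormula

variable {𝒵 𝒴 𝒰 : Type*}
  [NormedAddCommGroup 𝒵] [InnerProductSpace ℂ 𝒵] [CompleteSpace 𝒵]
  [NormedAddCommGroup 𝒴] [InnerProductSpace ℂ 𝒴] [CompleteSpace 𝒴]
  [NormedAddCommGroup 𝒰] [InnerProductSpace ℂ 𝒰] [CompleteSpace 𝒰]

theorem central_solution_quotient_formula_general
    -- the unilateral forward shifts and the embeddings onto the zeroth coordinate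
    (S𝒴 : ℓ²(𝒴) →L[ℂ] ℓ²(𝒴)) (S𝒰 : ℓ²(𝒰) →L[ℂ] ℓ²(𝒰))
    (hS𝒴0 : ∀ x : ℓ²(𝒴), S𝒴 x 0 = 0)
    (hS𝒴1 : ∀ (x : ℓ²(𝒴)) (n : ℕ), S𝒴 x (n + 1) = x n)
    (hS𝒰0 : ∀ x : ℓ²(𝒰), S𝒰 x 0 = 0)
    (hS𝒰1 : ∀ (x : ℓ²(𝒰)) (n : ℕ), S𝒰 x (n + 1) = x n)
    (E𝒰 : 𝒰 →L[ℂ] ℓ²(𝒰))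
    (hE𝒰0 : ∀ u : 𝒰, E𝒰 u 0 = u) (hE𝒰1 : ∀ (u : 𝒰) (n : ℕ), E𝒰 u (n + 1) = 0)
    -- the LTONP data set {W, W̃, Z}
    (Z : 𝒵 →L[ℂ] 𝒵) (W : ℓ²(𝒴) →L[ℂ] 𝒵) (Wt : ℓ²(𝒰) →L[ℂ] 𝒵)
    (hW : Z.comp W = W.comp S𝒴) (hWt : Z.comp Wt = Wt.comp S𝒰)
    -- Λ, B, B̃
    (Λ : 𝒵 →L[ℂ] 𝒵) (B : 𝒴 →L[ℂ] 𝒵) (Bt : 𝒰 →L[ℂ] 𝒵)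
    (hΛ : Λ = W.comp (adjoint W) - Wt.comp (adjoint Wt))
    (hBt : Bt = Wt.comp E𝒰)
    -- the Pick operator is strictly positive
    (hpos : IsStrictlyPositiveOp Λ)
    -- R∘ = (I + B̃*Λ⁻¹B̃)^{-1/2}
    (R : 𝒰 →L[ℂ] 𝒰)
    (hR : R.IsPositive ∧
      R.comp R = Ring.inverse (1 + (adjoint Bt).comp ((Ring.inverse Λ).comp Bt)))
    (z : ℂ) (hz : ‖z‖ < 1) :
    IsUnit (1 - z • adjoint Z) ∧
    -- Υ₂₂(z) is invertible
    IsUnit (R + (adjoint Bt).comp ((Ring.inverse (1 - z • adjoint Z)).comp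
      ((Ring.inverse Λ).comp (Bt.comp R)))) ∧
    -- I − zΛZ*(Λ + B̃B̃*)⁻¹ is invertible
    IsUnit (1 - z • (Λ.comp ((adjoint Z).comp
      (Ring.inverse (Λ + Bt.comp (adjoint Bt)))))) ∧
    -- the quotient formula F∘(z) = Υ₁₂(z) Υ₂₂(z)⁻¹
    ((adjoint B).comp ((Ring.inverse (Λ + Bt.comp (adjoint Bt))).comp
        ((Ring.inverse (1 - z • (Λ.comp ((adjoint Z).comp
          (Ring.inverse (Λ + Bt.comp (adjoint Bt))))))).comp Bt))
      = ((adjoint B).comp ((Ring.inverse (1 - z • adjoint Z)).comp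
          ((Ring.inverse Λ).comp (Bt.comp R)))).comp
        (Ring.inverse (R + (adjoint Bt).comp ((Ring.inverse (1 - z • adjoint Z)).comp
          ((Ring.inverse Λ).comp (Bt.comp R)))))) := by
  have hΛpos : IsStrictlyPositive Λ := ⟨(nonneg_iff_isPositive Λ).mpr hpos.1, hpos.2⟩
  have hWW : IsStrictlyPositive (W ∘L W†) := by
    rw [show W ∘L W† = Λ + Wt ∘L Wt† by rw [hΛ]; abel]
    exact hΛpos.add_nonneg ((nonneg_iff_isPositive _).mpr (isPositive_self_comp_adjoint Wt))
  have hS𝒴 := adjoint_shift_comp_shift hS𝒴0 hS𝒴1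
  have hA : IsUnit (1 - z • Z†) := by
    refine isUnit_one_sub_smul_star_of_mul_mul_star_le hWW ?_ hz
    simpa only [mul_def, comp_assoc, star_eq_adjoint] using comp_comp_adjoint_le_of_comp_eq hW hS𝒴
  set Δ := Λ + Bt ∘L Bt†
  have hΛΔ : Λ ≤ Δ :=
    le_add_of_nonneg_right ((nonneg_iff_isPositive _).mpr (isPositive_self_comp_adjoint Bt))
  have hStein : Z * Λ * star Z ≤ Δ := by
    have := comp_sub_comp_adjoint_le hW hS𝒴 hWt
      (shift_comp_adjoint_add_embedding_comp_adjoint hS𝒰0 hS𝒰1 hE𝒰0 hE𝒰1)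
    rw [← hΛ, ← hBt] at this
    simpa only [mul_def, comp_assoc, star_eq_adjoint] using this
  have hM := isUnit_one_sub_smul_mul_star_mul_ringInverse hΛpos hΛΔ hStein hz
  have hRu : IsUnit R := isUnit_of_mul_self_eq_ringInverse_one_add ((nonneg_iff_isPositive _).mpr
    ((nonneg_iff_isPositive _).mp hΛpos.ringInverse.nonneg |>.adjoint_conj Bt)) hR.2
  have hΔ : IsUnit Δ := (hΛpos.of_le hΛΔ).isUnit
  have hMΔ : (1 - z • (Λ ∘L Z† ∘L Ring.inverse Δ)) ∘L Δ = Λ ∘L (1 - z • Z†) + Bt ∘L Bt† :=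
    (one_sub_smul_mul_ringInverse_mul hΔ z Λ (Z†)).trans (by rw [add_sub_cancel_left]; rfl)
  refine ⟨hA, isUnit_add_comp_of_comp_eq_add hΛpos.isUnit hA hM hΔ hRu hMΔ, hM, ?_⟩
  rw [comp_assoc]
  exact congrArg _
    (ringInverse_comp_ringInverse_comp_eq_of_comp_eq_add hΛpos.isUnit hA hM hΔ hRu hMΔ)

theorem central_solution_quotient_formula
    -- the unilateral forward shifts and the embeddings onto the zeroth coordinate
    (S𝒴 : ℓ²(𝒴) →L[ℂ] ℓ²(𝒴)) (S𝒰 : ℓ²(𝒰) →L[ℂ] ℓ²(𝒰))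
    (hS𝒴0 : ∀ x : ℓ²(𝒴), S𝒴 x 0 = 0)
    (hS𝒴1 : ∀ (x : ℓ²(𝒴)) (n : ℕ), S𝒴 x (n + 1) = x n)
    (hS𝒰0 : ∀ x : ℓ²(𝒰), S𝒰 x 0 = 0)
    (hS𝒰1 : ∀ (x : ℓ²(𝒰)) (n : ℕ), S𝒰 x (n + 1) = x n)
    (E𝒴 : 𝒴 →L[ℂ] ℓ²(𝒴)) (E𝒰 : 𝒰 →L[ℂ] ℓ²(𝒰))
    (hE𝒴0 : ∀ y : 𝒴, E𝒴 y 0 = y) (hE𝒴1 : ∀ (y : 𝒴) (n : ℕ), E𝒴 y (n + 1) = 0)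
    (hE𝒰0 : ∀ u : 𝒰, E𝒰 u 0 = u) (hE𝒰1 : ∀ (u : 𝒰) (n : ℕ), E𝒰 u (n + 1) = 0)
    -- the LTONP data set {W, W̃, Z}
    (Z : 𝒵 →L[ℂ] 𝒵) (W : ℓ²(𝒴) →L[ℂ] 𝒵) (Wt : ℓ²(𝒰) →L[ℂ] 𝒵)
    (hW : Z.comp W = W.comp S𝒴) (hWt : Z.comp Wt = Wt.comp S𝒰)
    -- Λ, B, B̃
    (Λ : 𝒵 →L[ℂ] 𝒵) (B : 𝒴 →L[ℂ] 𝒵) (Bt : 𝒰 →L[ℂ] 𝒵)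
    (hΛ : Λ = W.comp (adjoint W) - Wt.comp (adjoint Wt))
    (hB : B = W.comp E𝒴) (hBt : Bt = Wt.comp E𝒰)
    -- the Pick operator is strictly positive
    (hpos : IsStrictlyPositiveOp Λ)
    -- R∘ = (I + B̃*Λ⁻¹B̃)^{-1/2}
    (R : 𝒰 →L[ℂ] 𝒰)
    (hR : R.IsPositive ∧
      R.comp R = Ring.inverse (1 + (adjoint Bt).comp ((Ring.inverse Λ).comp Bt)))
    (z : ℂ) (hz : ‖z‖ < 1) :
    IsUnit (1 - z • adjoint Z) ∧
    -- Υ₂₂(z) is invertible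
    IsUnit (R + (adjoint Bt).comp ((Ring.inverse (1 - z • adjoint Z)).comp
      ((Ring.inverse Λ).comp (Bt.comp R)))) ∧
    -- I − zΛZ*(Λ + B̃B̃*)⁻¹ is invertible
    IsUnit (1 - z • (Λ.comp ((adjoint Z).comp
      (Ring.inverse (Λ + Bt.comp (adjoint Bt)))))) ∧
    -- the quotient formula F∘(z) = Υ₁₂(z) Υ₂₂(z)⁻¹
    ((adjoint B).comp ((Ring.inverse (Λ + Bt.comp (adjoint Bt))).comp
        ((Ring.inverse (1 - z • (Λ.comp ((adjoint Z).comp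
          (Ring.inverse (Λ + Bt.comp (adjoint Bt))))))).comp Bt))
      = ((adjoint B).comp ((Ring.inverse (1 - z • adjoint Z)).comp
          ((Ring.inverse Λ).comp (Bt.comp R)))).comp
        (Ring.inverse (R + (adjoint Bt).comp ((Ring.inverse (1 - z • adjoint Z)).comp
          ((Ring.inverse Λ).comp (Bt.comp R)))))) :=
  central_solution_quotient_formula_general S𝒴 S𝒰 hS𝒴0 hS𝒴1 hS𝒰0 hS𝒰1 E𝒰 hE𝒰0 hE𝒰1 Z W Wt hW hWt Λ B
    Bt hΛ hBt hpos R hR z hz
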